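/- arXiv:2210.13987 — 3 statements merged into one kernel-verified Lean document; each statement's English description precedes it below -/
import Mathlib

section
/- Let h_c, h_t be nonzero vectors in ℂ^n and consider maximizing ‖h_t^H w‖² subject to |h_c^H w|² ≥ Γ and ‖w‖² ≤ P (assuming the problem is feasible). Then there exists an optimal solution w lying in the linear span of {h_c, h_t}. -/
set_option maxHeartbeats 800000 in
/-- maximizing `‖h_t^H w‖²` subject to `|h_c^H w|² ≥ Γ` and `‖w‖² ≤ P`
(feasible problem) admits an optimal solution in `span {h_c, h_t}`. -/
theorem stmt_0 {n : ℕ} (h_c h_t : EuclideanSpace ℂ (Fin n))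
    (hc : h_c ≠ 0) (ht : h_t ≠ 0) (Γ P : ℝ) (hΓ : 0 ≤ Γ) (hP : 0 < P)
    (hfeas : ∃ w : EuclideanSpace ℂ (Fin n), ‖w‖ ^ 2 ≤ P ∧ Γ ≤ ‖(inner ℂ h_c w : ℂ)‖ ^ 2) :
    ∃ w : EuclideanSpace ℂ (Fin n),
      ‖w‖ ^ 2 ≤ P ∧ Γ ≤ ‖(inner ℂ h_c w : ℂ)‖ ^ 2 ∧
      w ∈ Submodule.span ℂ ({h_c, h_t} : Set (EuclideanSpace ℂ (Fin n))) ∧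
      ∀ w' : EuclideanSpace ℂ (Fin n), ‖w'‖ ^ 2 ≤ P → Γ ≤ ‖(inner ℂ h_c w' : ℂ)‖ ^ 2 →
        ‖(inner ℂ h_t w' : ℂ)‖ ^ 2 ≤ ‖(inner ℂ h_t w : ℂ)‖ ^ 2 := by
  classical
  set S : Set (EuclideanSpace ℂ (Fin n)) := {w | ‖w‖ ^ 2 ≤ P ∧ Γ ≤ ‖(inner ℂ h_c w : ℂ)‖ ^ 2} with hS
  have hSne : S.Nonempty := by
    obtain ⟨w, hw1, hw2⟩ := hfeas
    exact ⟨w, hw1, hw2⟩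
  -- continuity of the maps
  have hcont_c : Continuous fun w : EuclideanSpace ℂ (Fin n) => ‖(inner ℂ h_c w : ℂ)‖ ^ 2 := by
    exact ((continuous_const.inner continuous_id).norm.pow 2)
  have hcont_t : Continuous fun w : EuclideanSpace ℂ (Fin n) => ‖(inner ℂ h_t w : ℂ)‖ ^ 2 := by
    exact ((continuous_const.inner continuous_id).norm.pow 2)
  have hSclosed : IsClosed S := by
    have h1 : IsClosed {w : EuclideanSpace ℂ (Fin n) | ‖w‖ ^ 2 ≤ P} :=
      isClosed_le (continuous_norm.pow 2) continuous_const
    have h2 : IsClosed {w : EuclideanSpace ℂ (Fin n) | Γ ≤ ‖(inner ℂ h_c w : ℂ)‖ ^ 2} :=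
      isClosed_le continuous_const hcont_c
    exact h1.inter h2
  have hSbdd : Bornology.IsBounded S := by
    apply (Metric.isBounded_closedBall (x := (0 : EuclideanSpace ℂ (Fin n))) (r := Real.sqrt P)).subset
    intro w hw
    have hw1 : ‖w‖ ^ 2 ≤ P := hw.1
    have : ‖w‖ ≤ Real.sqrt P := by
      have := Real.sqrt_le_sqrt hw1
      rwa [Real.sqrt_sq (norm_nonneg w)] at this
    simpa [Metric.mem_closedBall, dist_eq_norm] using this
  have hScompact : IsCompact S := Metric.isCompact_of_isClosed_isBounded hSclosed hSbdd
  obtain ⟨w, hwS, hwmax⟩ :=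
    hScompact.exists_isMaxOn hSne (hcont_t.continuousOn)
  -- project onto the span
  set K : Submodule ℂ (EuclideanSpace ℂ (Fin n)) :=
    Submodule.span ℂ ({h_c, h_t} : Set (EuclideanSpace ℂ (Fin n))) with hK
  have hcK : h_c ∈ K := Submodule.subset_span (by simp)
  have htK : h_t ∈ K := Submodule.subset_span (by simp)
  haveI : CompleteSpace K := FiniteDimensional.complete ℂ K
  set p : EuclideanSpace ℂ (Fin n) := (K.orthogonalProjectionOnto w : EuclideanSpace ℂ (Fin n)) with hp
  have hperp : w - p ∈ Kᗮ := K.sub_starProjection_mem_orthogonal w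
  have hinner : ∀ v ∈ K, (inner ℂ v p : ℂ) = inner ℂ v w := by
    intro v hv
    have h0 : (inner ℂ v (w - p) : ℂ) = 0 := (Submodule.mem_orthogonal K _).mp hperp v hv
    rw [inner_sub_right, sub_eq_zero] at h0
    exact h0.symm
  have hnorm : ‖p‖ ≤ ‖w‖ := by
    calc ‖p‖ ≤ ‖K.orthogonalProjectionOnto‖ * ‖w‖ := (K.orthogonalProjectionOnto).le_opNorm w
    _ ≤ 1 * ‖w‖ := by
        exact mul_le_mul_of_nonneg_right (K.orthogonalProjectionOnto_norm_le) (norm_nonneg _)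
    _ = ‖w‖ := one_mul _
  refine ⟨p, ?_, ?_, ?_, ?_⟩
  · calc ‖p‖ ^ 2 ≤ ‖w‖ ^ 2 := by
          exact pow_le_pow_left₀ (norm_nonneg _) hnorm 2
      _ ≤ P := hwS.1
  · rw [hinner h_c hcK]; exact hwS.2
  · exact (K.orthogonalProjectionOnto w).2
  · intro w' h1 h2
    rw [hinner h_t htK]
    exact hwmax ⟨h1, h2⟩
end

section
/- Let h_c, h_t ∈ ℂ^n be linearly independent, u₁ = h_c/‖h_c‖, u₂ = (h_t − (u₁^H h_t)u₁)/‖h_t − (u₁^H h_t)u₁‖. Suppose 0 ≤ Γ ≤ P‖h_c‖² and P|h_c^H h_t|² < Γ‖h_t‖². Then w = x₁u₁ + x₂u₂ with x₁ = √(Γ/‖h_c‖²)·(u₁^H h_t)/|u₁^H h_t| and x₂ = √(P − Γ/‖h_c‖²)·(u₂^H h_t)/|u₂^H h_t| satisfies ‖w‖² = P and |h_c^H w|² = Γ. -/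
open scoped InnerProductSpace ComplexConjugate

set_option maxHeartbeats 1000000 in
/-- Gram–Schmidt beamformer `w = x₁u₁ + x₂u₂` uses full power `P` and makes the
communication constraint tight (`|h_c^H w|² = Γ`) in the weakly-coupled regime. -/
theorem stmt_3 {n : ℕ} (h_c h_t : EuclideanSpace ℂ (Fin n))
    (hli : LinearIndependent ℂ ![h_c, h_t])
    (hct : (inner ℂ h_c h_t : ℂ) ≠ 0)
    (Γ P : ℝ) (hΓ : 0 ≤ Γ) (hP : 0 < P) (hΓP : Γ ≤ P * ‖h_c‖ ^ 2)
    (hweak : P * ‖(inner ℂ h_c h_t : ℂ)‖ ^ 2 < Γ * ‖h_t‖ ^ 2)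
    (u₁ u₂ w : EuclideanSpace ℂ (Fin n)) (x₁ x₂ : ℂ)
    (hu₁ : u₁ = ((‖h_c‖⁻¹ : ℝ) : ℂ) • h_c)
    (hu₂ : u₂ = ((‖h_t - (inner ℂ u₁ h_t : ℂ) • u₁‖⁻¹ : ℝ) : ℂ) •
      (h_t - (inner ℂ u₁ h_t : ℂ) • u₁))
    (hx₁ : x₁ = ((Real.sqrt (Γ / ‖h_c‖ ^ 2) : ℝ) : ℂ) *
      ((inner ℂ u₁ h_t : ℂ) / ((‖(inner ℂ u₁ h_t : ℂ)‖ : ℝ) : ℂ)))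
    (hx₂ : x₂ = ((Real.sqrt (P - Γ / ‖h_c‖ ^ 2) : ℝ) : ℂ) *
      ((inner ℂ u₂ h_t : ℂ) / ((‖(inner ℂ u₂ h_t : ℂ)‖ : ℝ) : ℂ)))
    (hw : w = x₁ • u₁ + x₂ • u₂) :
    ‖w‖ ^ 2 = P ∧ ‖(inner ℂ h_c w : ℂ)‖ ^ 2 = Γ := by
  -- basic nonvanishing facts
  have hc0 : h_c ≠ 0 := by
    rintro rfl; exact hct (by simp)
  have ha : (0:ℝ) < ‖h_c‖ := norm_pos_iff.mpr hc0
  set a : ℝ := ‖h_c‖ with ha_def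
  -- u₁ is a unit vector
  have hu₁norm : ‖u₁‖ = 1 := by
    rw [hu₁, norm_smul, Complex.norm_real, Real.norm_eq_abs, abs_inv, abs_norm,
      inv_mul_cancel₀ ha.ne']
  -- inner u₁ h_t
  have hiu₁ : (inner ℂ u₁ h_t : ℂ) = ((a⁻¹ : ℝ) : ℂ) * (inner ℂ h_c h_t : ℂ) := by
    rw [hu₁, inner_smul_left]
    simp
  have hiu₁ne : (inner ℂ u₁ h_t : ℂ) ≠ 0 := by
    rw [hiu₁]
    exact mul_ne_zero (by exact_mod_cast (inv_ne_zero ha.ne')) hct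
  -- the Gram-Schmidt residual
  set c : ℂ := (inner ℂ u₁ h_t : ℂ) with hc_def
  clear_value c
  set v : EuclideanSpace ℂ (Fin n) := h_t - c • u₁ with hv_def
  clear_value v
  have hiu₁v : (inner ℂ u₁ v : ℂ) = 0 := by
    rw [hv_def, inner_sub_right, inner_smul_right, inner_self_eq_norm_sq_to_K, hu₁norm]
    simp [hc_def]
  -- norm of v via Pythagoras: ‖h_t‖² = ‖v‖² + ‖c‖²
  have hpyth : ‖h_t‖ ^ 2 = ‖v‖ ^ 2 + ‖c‖ ^ 2 := by
    have hht : h_t = v + c • u₁ := by rw [hv_def]; abel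
    have horth : (inner ℂ v (c • u₁) : ℂ) = 0 := by
      rw [inner_smul_right]
      have : (inner ℂ v u₁ : ℂ) = 0 := by
        rw [← inner_conj_symm, hiu₁v]; simp
      rw [this, mul_zero]
    have hns := norm_add_sq (𝕜 := ℂ) v (c • u₁)
    rw [horth, norm_smul, hu₁norm] at hns
    rw [hht, hns]
    simp
  -- ‖h_t‖ > 0 and the strict Cauchy–Schwarz consequence v ≠ 0
  have hΓpos : 0 < Γ := by
    by_contra h
    push_neg at h
    have hΓ0 : Γ = 0 := le_antisymm h hΓ
    rw [hΓ0] at hweak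
    have : 0 < P * ‖(inner ℂ h_c h_t : ℂ)‖ ^ 2 :=
      mul_pos hP (pow_pos (norm_pos_iff.mpr hct) 2)
    linarith [hweak]
  have hhtpos : 0 < ‖h_t‖ := by
    rcases (norm_nonneg h_t).lt_or_eq with h | h
    · exact h
    · exfalso
      have : P * ‖(inner ℂ h_c h_t : ℂ)‖ ^ 2 < 0 := by
        rw [← h] at hweak; simpa using hweak
      nlinarith [pow_pos (norm_pos_iff.mpr hct) 2]
  have hcs : ‖c‖ ^ 2 < ‖h_t‖ ^ 2 := by
    have h1 : ‖c‖ ^ 2 = ‖(inner ℂ h_c h_t : ℂ)‖ ^ 2 / a ^ 2 := by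
      rw [hiu₁, norm_mul]
      simp only [Complex.norm_real, Real.norm_eq_abs, abs_inv, abs_norm]
      field_simp
      rw [sq_abs]
    have h2 : ‖(inner ℂ h_c h_t : ℂ)‖ ^ 2 < a ^ 2 * ‖h_t‖ ^ 2 := by
      have : P * ‖(inner ℂ h_c h_t : ℂ)‖ ^ 2 < P * (a ^ 2 * ‖h_t‖ ^ 2) := by
        calc P * ‖(inner ℂ h_c h_t : ℂ)‖ ^ 2 < Γ * ‖h_t‖ ^ 2 := hweak
          _ ≤ P * a ^ 2 * ‖h_t‖ ^ 2 := by
              apply mul_le_mul_of_nonneg_right hΓP (sq_nonneg _)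
          _ = P * (a ^ 2 * ‖h_t‖ ^ 2) := by ring
      exact lt_of_mul_lt_mul_left this hP.le
    rw [h1]
    rw [div_lt_iff₀ (pow_pos ha 2)] at *
    nlinarith
  have hv0 : v ≠ 0 := by
    intro h
    rw [h] at hpyth
    simp only [norm_zero, zero_pow, ne_eq, OfNat.ofNat_ne_zero, not_false_iff, zero_add] at hpyth
    nlinarith
  have hbpos : (0:ℝ) < ‖v‖ := norm_pos_iff.mpr hv0
  set b : ℝ := ‖v‖ with hb_def
  clear_value b
  -- u₂ is a unit vector
  have hu₂norm : ‖u₂‖ = 1 := by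
    rw [hu₂, norm_smul, Complex.norm_real, Real.norm_eq_abs, abs_inv, abs_of_pos hbpos,
      ← hb_def, inv_mul_cancel₀ hbpos.ne']
  -- orthogonality of u₁, u₂
  have hiu₁u₂ : (inner ℂ u₁ u₂ : ℂ) = 0 := by
    rw [hu₂, inner_smul_right, hiu₁v, mul_zero]
  -- inner u₂ h_t = b > 0
  have hivht : (inner ℂ v h_t : ℂ) = ((b : ℝ) : ℂ) ^ 2 := by
    have hht : h_t = v + c • u₁ := by rw [hv_def]; abel
    have hvu₁ : (inner ℂ v u₁ : ℂ) = 0 := by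
      rw [← inner_conj_symm, hiu₁v]; simp
    rw [hht, inner_add_right, inner_smul_right, hvu₁, mul_zero, add_zero,
      inner_self_eq_norm_sq_to_K]
    rw [hb_def]
    norm_cast
  have hiu₂ : (inner ℂ u₂ h_t : ℂ) = ((b : ℝ) : ℂ) := by
    have hbC : ((b:ℝ):ℂ) ≠ 0 := by exact_mod_cast hbpos.ne'
    rw [hu₂, inner_smul_left, hivht, Complex.conj_ofReal]
    push_cast
    field_simp
  have hiu₂ne : (inner ℂ u₂ h_t : ℂ) ≠ 0 := by
    rw [hiu₂]; exact_mod_cast hbpos.ne'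
  -- norms of x₁, x₂
  have hΓa : 0 ≤ Γ / a ^ 2 := div_nonneg hΓ (sq_nonneg a)
  have hPΓa : 0 ≤ P - Γ / a ^ 2 := by
    rw [sub_nonneg, div_le_iff₀ (pow_pos ha 2)]
    linarith
  have hx₁norm : ‖x₁‖ ^ 2 = Γ / a ^ 2 := by
    rw [hx₁, norm_mul, norm_div]
    simp only [Complex.norm_real, Real.norm_eq_abs, abs_norm]
    rw [div_self (norm_ne_zero_iff.mpr hiu₁ne), mul_one, sq_abs, Real.sq_sqrt hΓa]
  have hx₂norm : ‖x₂‖ ^ 2 = P - Γ / a ^ 2 := by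
    rw [hx₂, norm_mul, norm_div]
    simp only [Complex.norm_real, Real.norm_eq_abs, abs_norm]
    rw [div_self (norm_ne_zero_iff.mpr hiu₂ne), mul_one, sq_abs, Real.sq_sqrt hPΓa]
  constructor
  · -- ‖w‖² = P
    have horth : (inner ℂ (x₁ • u₁) (x₂ • u₂) : ℂ) = 0 := by
      rw [inner_smul_left, inner_smul_right, hiu₁u₂]
      ring
    have := norm_add_sq (𝕜 := ℂ) (x₁ • u₁) (x₂ • u₂)
    rw [horth] at this
    rw [hw, this, norm_smul, norm_smul, hu₁norm, hu₂norm]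
    simp only [map_zero, mul_zero, add_zero, mul_one]
    rw [hx₁norm, hx₂norm]
    ring
  · -- |⟪h_c, w⟫|² = Γ
    have hhc : h_c = ((a : ℝ) : ℂ) • u₁ := by
      rw [hu₁, smul_smul]
      rw [← Complex.ofReal_mul, mul_inv_cancel₀ ha.ne']
      simp
    have h1 : (inner ℂ h_c u₁ : ℂ) = ((a : ℝ) : ℂ) := by
      rw [hhc, inner_smul_left, inner_self_eq_norm_sq_to_K, hu₁norm]
      rw [Complex.conj_ofReal]; simp
    have h2 : (inner ℂ h_c u₂ : ℂ) = 0 := by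
      rw [hhc, inner_smul_left, hiu₁u₂, mul_zero]
    have h3 : (inner ℂ h_c w : ℂ) = x₁ * ((a : ℝ) : ℂ) := by
      rw [hw, inner_add_right, inner_smul_right, inner_smul_right, h1, h2]
      ring
    rw [h3, norm_mul]
    simp only [Complex.norm_real, Real.norm_eq_abs]
    rw [mul_pow, hx₁norm, sq_abs]
    field_simp
end

section
/- Under the setup of the previous statement (h_c, h_t linearly independent, h_c^H h_t ≠ 0, 0 < Γ < P‖h_c‖², P|h_c^H h_t|² < Γ‖h_t‖²), the beamformer w = x₁u₁ + x₂u₂ achieves |h_t^H w| = √(Γ/‖h_c‖²)·|u₁^H h_t| + √(P − Γ/‖h_c‖²)·|u₂^H h_t|, and this is the maximum of |h_t^H w'| over all w' in span{u₁,u₂} with ‖w'‖² ≤ P and |h_c^H w'|² ≥ Γ. -/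
lemma key_scalar (a b r₁ r₂ s t : ℝ) (ha : 0 ≤ a) (hb : 0 < b)
    (hr₁ : 0 ≤ r₁) (hr₂ : 0 ≤ r₂) (hs : Real.sqrt a ≤ s) (ht : 0 ≤ t)
    (hst : s ^ 2 + t ^ 2 ≤ a + b) (hwk : b * r₁ ^ 2 ≤ a * r₂ ^ 2) :
    s * r₁ + t * r₂ ≤ Real.sqrt a * r₁ + Real.sqrt b * r₂ := by
  set sa := Real.sqrt a with hsa
  set sb := Real.sqrt b with hsb
  have hsa0 : 0 ≤ sa := Real.sqrt_nonneg a
  have hsb0 : 0 < sb := Real.sqrt_pos.mpr hb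
  have hsa2 : sa ^ 2 = a := Real.sq_sqrt ha
  have hsb2 : sb ^ 2 = b := Real.sq_sqrt hb.le
  have hs0 : 0 ≤ s := hsa0.trans hs
  have h2 : sb * r₁ ≤ sa * r₂ := by
    have h1 : (sb * r₁) ^ 2 ≤ (sa * r₂) ^ 2 := by nlinarith
    exact le_of_sq_le_sq h1 (by positivity)
  have htb : t ≤ sb := by
    have h1 : t ^ 2 ≤ sb ^ 2 := by nlinarith
    exact le_of_sq_le_sq h1 hsb0.le
  have hkey : (s - sa) * (sb + t) * r₁ ≤ (sb - t) * (sb + t) * r₂ := by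
    have h3 : (s - sa) * (s + sa) ≤ (sb - t) * (sb + t) := by nlinarith
    have h4 : (sb + t) * r₁ ≤ (s + sa) * r₂ := by nlinarith
    nlinarith [mul_nonneg (sub_nonneg.2 hs) (sub_nonneg.2 h4), sub_nonneg.2 h3,
      mul_nonneg (sub_nonneg.2 h3) hr₂]
  have hpos : 0 < sb + t := by linarith
  nlinarith [mul_pos hpos hpos]

set_option maxHeartbeats 1000000 in
/-- the beamformer `w = x₁u₁ + x₂u₂` achieves
`|h_t^H w| = √(Γ/‖h_c‖²)|u₁^H h_t| + √(P − Γ/‖h_c‖²)|u₂^H h_t|`, and this is the maximum of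
`|h_t^H w'|` over `w' ∈ span{u₁,u₂}` with `‖w'‖² ≤ P` and `|h_c^H w'|² ≥ Γ`. -/
theorem stmt_4 {n : ℕ} (h_c h_t : EuclideanSpace ℂ (Fin n))
    (hli : LinearIndependent ℂ ![h_c, h_t])
    (hct : (inner ℂ h_c h_t : ℂ) ≠ 0)
    (Γ P : ℝ) (hΓ : 0 < Γ) (hΓP : Γ < P * ‖h_c‖ ^ 2)
    (hweak : P * ‖(inner ℂ h_c h_t : ℂ)‖ ^ 2 < Γ * ‖h_t‖ ^ 2)
    (u₁ u₂ w : EuclideanSpace ℂ (Fin n)) (x₁ x₂ : ℂ)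
    (hu₁ : u₁ = ((‖h_c‖⁻¹ : ℝ) : ℂ) • h_c)
    (hu₂ : u₂ = ((‖h_t - (inner ℂ u₁ h_t : ℂ) • u₁‖⁻¹ : ℝ) : ℂ) •
      (h_t - (inner ℂ u₁ h_t : ℂ) • u₁))
    (hx₁ : x₁ = ((Real.sqrt (Γ / ‖h_c‖ ^ 2) : ℝ) : ℂ) *
      ((inner ℂ u₁ h_t : ℂ) / ((‖(inner ℂ u₁ h_t : ℂ)‖ : ℝ) : ℂ)))
    (hx₂ : x₂ = ((Real.sqrt (P - Γ / ‖h_c‖ ^ 2) : ℝ) : ℂ) *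
      ((inner ℂ u₂ h_t : ℂ) / ((‖(inner ℂ u₂ h_t : ℂ)‖ : ℝ) : ℂ)))
    (hw : w = x₁ • u₁ + x₂ • u₂) :
    ‖(inner ℂ h_t w : ℂ)‖ =
      Real.sqrt (Γ / ‖h_c‖ ^ 2) * ‖(inner ℂ u₁ h_t : ℂ)‖ +
      Real.sqrt (P - Γ / ‖h_c‖ ^ 2) * ‖(inner ℂ u₂ h_t : ℂ)‖ ∧
    ∀ w' ∈ Submodule.span ℂ ({u₁, u₂} : Set (EuclideanSpace ℂ (Fin n))),
      ‖w'‖ ^ 2 ≤ P → Γ ≤ ‖(inner ℂ h_c w' : ℂ)‖ ^ 2 →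
      ‖(inner ℂ h_t w' : ℂ)‖ ≤ ‖(inner ℂ h_t w : ℂ)‖ := by
  have hc0 : h_c ≠ 0 := fun h => hct (by simp [h])
  have hL : 0 < ‖h_c‖ := norm_pos_iff.mpr hc0
  have hfin := linearIndependent_fin2.mp hli
  have hnotmul : ∀ z : ℂ, z • h_t ≠ h_c := by
    intro z
    simpa using hfin.2 z
  set L := ‖h_c‖ with hLdef
  set c1 : ℂ := (inner ℂ u₁ h_t : ℂ) with hc1def
  set c2 : ℂ := (inner ℂ u₂ h_t : ℂ) with hc2def
  set r₁ := ‖c1‖ with hr1def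
  set r₂ := ‖c2‖ with hr2def
  set a := Γ / L ^ 2 with hadef
  set b := P - Γ / L ^ 2 with hbdef
  have ha0 : 0 < a := div_pos hΓ (by positivity)
  have hb0 : 0 < b := by
    rw [hbdef]
    have : Γ / L ^ 2 < P := by
      rw [div_lt_iff₀ (by positivity)]
      linarith [hΓP]
    linarith
  -- basic inner product facts
  have hLC : (L : ℂ) ≠ 0 := by exact_mod_cast hL.ne'
  have hu1n : ‖u₁‖ = 1 := by
    rw [hu₁, norm_smul, Complex.norm_real, Real.norm_eq_abs, abs_of_pos (inv_pos.mpr hL),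
      ← hLdef, inv_mul_cancel₀ hL.ne']
  have hu1u1 : (inner ℂ u₁ u₁ : ℂ) = 1 := by
    rw [inner_self_eq_norm_sq_to_K, hu1n]; norm_num
  have hcu1 : (inner ℂ h_c u₁ : ℂ) = (L : ℂ) := by
    rw [hu₁, inner_smul_right, inner_self_eq_norm_sq_to_K, ← hLdef]
    push_cast
    field_simp
    simp
  have hc1L : (inner ℂ h_c h_t : ℂ) = (L : ℂ) * c1 := by
    rw [hc1def, hu₁, inner_smul_left, Complex.conj_ofReal]
    push_cast
    rw [← mul_assoc, mul_inv_cancel₀ hLC, one_mul]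
  have hc1ne : c1 ≠ 0 := by
    intro h
    apply hct
    rw [hc1L, h, mul_zero]
  have hr1pos : 0 < r₁ := norm_pos_iff.mpr hc1ne
  set v := h_t - c1 • u₁ with hvdef
  have hhtv : h_t = v + c1 • u₁ := by rw [hvdef]; abel
  have hconj : (inner ℂ h_t u₁ : ℂ) = starRingEnd ℂ c1 := by
    rw [hc1def, ← inner_conj_symm]
  have hvu1 : (inner ℂ v u₁ : ℂ) = 0 := by
    rw [hvdef, inner_sub_left, inner_smul_left, hu1u1, hconj, mul_one, sub_self]
  have hu1v : (inner ℂ u₁ v : ℂ) = 0 := by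
    rw [← inner_conj_symm, hvu1, map_zero]
  have hv0 : v ≠ 0 := by
    intro h
    have hht : h_t = (c1 * ((L⁻¹ : ℝ) : ℂ)) • h_c := by
      have h1 : h_t = c1 • u₁ := by
        have := sub_eq_zero.mp (hvdef ▸ h)
        exact this
      rw [h1, hu₁, smul_smul]
    have hμ : c1 * ((L⁻¹ : ℝ) : ℂ) ≠ 0 := by
      apply mul_ne_zero hc1ne
      simp [hL.ne']
    exact hnotmul (c1 * ((L⁻¹ : ℝ) : ℂ))⁻¹ (by rw [hht, smul_smul, inv_mul_cancel₀ hμ, one_smul])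
  set m := ‖v‖ with hmdef
  have hm : 0 < m := norm_pos_iff.mpr hv0
  have hu2v : u₂ = ((m⁻¹ : ℝ) : ℂ) • v := hu₂
  have hu2n : ‖u₂‖ = 1 := by
    rw [hu2v, norm_smul, Complex.norm_real, Real.norm_eq_abs, abs_of_pos (inv_pos.mpr hm),
      ← hmdef, inv_mul_cancel₀ hm.ne']
  have hu1u2 : (inner ℂ u₁ u₂ : ℂ) = 0 := by
    rw [hu2v, inner_smul_right, hu1v, mul_zero]
  have hcu2 : (inner ℂ h_c u₂ : ℂ) = 0 := by
    rw [hu2v, inner_smul_right]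
    have : (inner ℂ h_c v : ℂ) = 0 := by
      rw [hvdef, inner_sub_right, inner_smul_right, hc1L, hcu1]
      ring
    rw [this, mul_zero]
  have hmC : (m : ℂ) ≠ 0 := by exact_mod_cast hm.ne'
  have hvv : (inner ℂ v v : ℂ) = ((m ^ 2 : ℝ) : ℂ) := by
    rw [inner_self_eq_norm_sq_to_K, ← hmdef]; norm_cast
  have hvht : (inner ℂ v h_t : ℂ) = ((m ^ 2 : ℝ) : ℂ) := by
    have : (inner ℂ v h_t : ℂ) = inner ℂ v v + c1 * (inner ℂ v u₁ : ℂ) := by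
      conv_lhs => rw [hhtv]
      rw [inner_add_right, inner_smul_right]
    rw [this, hvu1, mul_zero, add_zero, hvv]
  have hc2m : c2 = ((m : ℝ) : ℂ) := by
    rw [hc2def, hu2v, inner_smul_left, Complex.conj_ofReal, hvht]
    push_cast
    field_simp [hmC]
  have hr2m : r₂ = m := by
    rw [hr2def, hc2m, Complex.norm_real, Real.norm_eq_abs, abs_of_pos hm]
  have hconj2 : (inner ℂ h_t u₂ : ℂ) = starRingEnd ℂ c2 := by
    rw [hc2def, ← inner_conj_symm]
  have hpyth : ‖h_t‖ ^ 2 = r₁ ^ 2 + m ^ 2 := by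
    have h1 : ‖h_t‖ ^ 2 = ‖c1 • u₁‖ ^ 2 + 2 * RCLike.re (inner ℂ (c1 • u₁) v : ℂ) + ‖v‖ ^ 2 := by
      conv_lhs => rw [hhtv, add_comm]
      exact norm_add_sq _ _
    have h2 : (inner ℂ (c1 • u₁) v : ℂ) = 0 := by
      rw [inner_smul_left, hu1v, mul_zero]
    rw [h2] at h1
    simp only [map_zero, mul_zero, add_zero] at h1
    rw [h1, norm_smul, hu1n, mul_one]
  clear_value m v b a r₂ r₁ c2 c1 L
  -- Part 1 : value of inner ℂ h_t w
  have hdiv1 : (c1 / ((r₁ : ℝ) : ℂ)) * starRingEnd ℂ c1 = ((r₁ : ℝ) : ℂ) := by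
    rw [div_mul_eq_mul_div, Complex.mul_conj']
    rw [sq]
    rw [← hr1def]
    field_simp
  have hdiv2 : (c2 / ((r₂ : ℝ) : ℂ)) * starRingEnd ℂ c2 = ((r₂ : ℝ) : ℂ) := by
    rw [div_mul_eq_mul_div, Complex.mul_conj']
    rw [sq]
    rw [← hr2def]
    have : (0:ℝ) < r₂ := by rw [hr2m]; exact hm
    field_simp
  have hwinner : (inner ℂ h_t w : ℂ) = ((Real.sqrt a * r₁ + Real.sqrt b * r₂ : ℝ) : ℂ) := by
    rw [hw, inner_add_right, inner_smul_right, inner_smul_right, hx₁, hx₂, hconj, hconj2]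
    rw [mul_assoc, mul_assoc, hdiv1, hdiv2]
    push_cast
    ring
  have hpart1 : ‖(inner ℂ h_t w : ℂ)‖ = Real.sqrt a * r₁ + Real.sqrt b * r₂ := by
    have hnn : 0 ≤ Real.sqrt a * r₁ + Real.sqrt b * r₂ := by
      rw [hr1def, hr2def]
      positivity
    rw [hwinner, Complex.norm_real, Real.norm_eq_abs, abs_of_nonneg hnn]
  refine ⟨hpart1, ?_⟩
  -- Part 2
  intro w' hw' hPw hΓw
  obtain ⟨α, β, hαβ⟩ := Submodule.mem_span_pair.mp hw'
  have hcw' : (inner ℂ h_c w' : ℂ) = α * (L : ℂ) := by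
    rw [← hαβ, inner_add_right, inner_smul_right, inner_smul_right, hcu1, hcu2]
    ring
  have hαa : a ≤ ‖α‖ ^ 2 := by
    have h1 : ‖(inner ℂ h_c w' : ℂ)‖ ^ 2 = ‖α‖ ^ 2 * L ^ 2 := by
      rw [hcw', norm_mul, Complex.norm_real, Real.norm_eq_abs, abs_of_pos hL]
      ring
    rw [h1] at hΓw
    rw [hadef, div_le_iff₀ (by positivity)]
    linarith
  have hnw' : ‖w'‖ ^ 2 = ‖α‖ ^ 2 + ‖β‖ ^ 2 := by
    rw [← hαβ]
    have h1 : ‖α • u₁ + β • u₂‖ ^ 2 =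
        ‖α • u₁‖ ^ 2 + 2 * RCLike.re (inner ℂ (α • u₁) (β • u₂) : ℂ) + ‖β • u₂‖ ^ 2 :=
      norm_add_sq _ _
    have h2 : (inner ℂ (α • u₁) (β • u₂) : ℂ) = 0 := by
      rw [inner_smul_left, inner_smul_right, hu1u2, mul_zero, mul_zero]
    rw [h2] at h1
    simp only [map_zero, mul_zero, add_zero] at h1
    rw [h1, norm_smul, norm_smul, hu1n, hu2n, mul_one, mul_one]
  have htri : ‖(inner ℂ h_t w' : ℂ)‖ ≤ ‖α‖ * r₁ + ‖β‖ * r₂ := by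
    rw [← hαβ, inner_add_right, inner_smul_right, inner_smul_right, hconj, hconj2]
    refine (norm_add_le _ _).trans (le_of_eq ?_)
    rw [norm_mul, norm_mul, RCLike.norm_conj, RCLike.norm_conj, hr1def, hr2def]
  have hwk2 : b * r₁ ^ 2 ≤ a * r₂ ^ 2 := by
    have h1 : ‖(inner ℂ h_c h_t : ℂ)‖ ^ 2 = L ^ 2 * r₁ ^ 2 := by
      rw [hc1L, norm_mul, Complex.norm_real, Real.norm_eq_abs, abs_of_pos hL, ← hr1def]
      ring
    rw [h1, hpyth] at hweak
    have hL2 : (0:ℝ) < L ^ 2 := by positivity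
    have hq : a * L ^ 2 = Γ := by rw [hadef]; exact div_mul_cancel₀ _ hL2.ne'
    rw [hr2m, hbdef, ← hadef]
    nlinarith [hweak, hq, hL2, sq_nonneg r₁]
  have hsα : Real.sqrt a ≤ ‖α‖ := by
    have := Real.sqrt_le_sqrt hαa
    rwa [Real.sqrt_sq (norm_nonneg α)] at this
  have hst : ‖α‖ ^ 2 + ‖β‖ ^ 2 ≤ a + b := by
    rw [← hnw']
    have : a + b = P := by rw [hadef, hbdef]; ring
    rw [this]
    exact hPw
  have hmain := key_scalar a b r₁ r₂ ‖α‖ ‖β‖ ha0.le hb0 hr1pos.le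
    (by rw [hr2m]; exact hm.le) hsα (norm_nonneg _) hst hwk2
  rw [hpart1]
  exact htri.trans hmain
end
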